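/- arXiv:2103.04113 — 2 statements merged into one kernel-verified Lean document; each statement's English description precedes it below -/
import Mathlib

section
/- For real numbers m, n with n > m > 0 and m + 2 < 2n, the improper integral ∫₀^∞ (x² - 1)·x^(m-1)·log(x)/(x^(2n) - 1) dx equals -(π²/(4n²))·(csc²(πm/(2n)) - csc²(π(m+2)/(2n))). -/
open Real MeasureTheory Set

/-!
Write `p = m`, `b = 2n`. On `(0, 1)` expand `1 / (1 - x ^ b)` as a geometric series; the terms
have constant sign, and since `∫₀¹ x ^ (c - 1) * log x = -1 / c ^ 2`, termwise integration gives
`∑ₖ (1 / (p + 2 + b k) ^ 2 - 1 / (p + b k) ^ 2)`.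
The substitution `x ↦ x⁻¹` turns the integral over `(1, ∞)` into minus the integral over `(0, 1)`
with `p` replaced by `b - p - 2`. The four resulting series pair up into two instances of
`∑_{k ∈ ℤ} 1 / (α + k) ^ 2 = π ^ 2 / sin (π α) ^ 2` with `α = p / b` and `α = (p + 2) / b`,
which is Parseval's identity for `x ↦ exp (-2πiαx)` on `(0, 1]`.
-/

lemma image_exp_neg_Ioi : (fun t : ℝ ↦ exp (-t)) '' Ioi 0 = Ioo 0 1 := by
  ext y
  constructor
  · rintro ⟨t, ht, rfl⟩
    exact ⟨exp_pos _, exp_lt_one_iff.mpr (neg_neg_iff_pos.mpr ht)⟩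
  · rintro ⟨hy0, hy1⟩
    exact ⟨-log y, neg_pos.mpr (log_neg hy0 hy1), by simp [exp_log hy0]⟩

lemma hasDerivAt_exp_neg (t : ℝ) : HasDerivAt (fun t ↦ exp (-t)) (-exp (-t)) t := by
  simpa using (hasDerivAt_neg' t).exp

lemma abs_deriv_smul_rpow_mul_log_exp_neg (c t : ℝ) :
    |-exp (-t)| • (exp (-t) ^ (c - 1) * log (exp (-t))) = -(t * exp (-(c * t))) := by
  rw [abs_neg, abs_of_pos (exp_pos _), log_exp, rpow_def_of_pos (exp_pos _), log_exp,
    smul_eq_mul, show -(c * t) = -t + -t * (c - 1) by ring, exp_add]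
  ring

lemma integrableOn_rpow_mul_log_Ioo {c : ℝ} (hc : 0 < c) :
    IntegrableOn (fun x : ℝ ↦ x ^ (c - 1) * log x) (Ioo 0 1) := by
  rw [← image_exp_neg_Ioi, integrableOn_image_iff_integrableOn_abs_deriv_smul measurableSet_Ioi
    (fun t _ ↦ (hasDerivAt_exp_neg t).hasDerivWithinAt) (exp_injective.comp neg_injective).injOn]
  have h : IntegrableOn (fun t : ℝ ↦ t * exp (-(c * t))) (Ioi 0) := by
    simpa using integrableOn_rpow_mul_exp_neg_mul_rpow (p := 1) (s := 1) (b := c) (by norm_num)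
      one_pos hc
  exact IntegrableOn.congr_fun (Integrable.neg h)
    (fun t _ ↦ (abs_deriv_smul_rpow_mul_log_exp_neg c t).symm) measurableSet_Ioi

lemma integral_rpow_mul_log_Ioo {c : ℝ} (hc : 0 < c) :
    ∫ x in Ioo 0 1, x ^ (c - 1) * log x = -1 / c ^ 2 := by
  rw [← image_exp_neg_Ioi, integral_image_eq_integral_abs_deriv_smul measurableSet_Ioi
    (fun t _ ↦ (hasDerivAt_exp_neg t).hasDerivWithinAt) (exp_injective.comp neg_injective).injOn,
    setIntegral_congr_fun measurableSet_Ioi fun t _ ↦ abs_deriv_smul_rpow_mul_log_exp_neg c t,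
    integral_neg]
  have := integral_rpow_mul_exp_neg_mul_Ioi (a := 2) (r := c) (by norm_num) hc
  norm_num at this
  rw [this, neg_div, one_div]

lemma summable_one_div_add_mul_sq (a : ℝ) {b : ℝ} (hb : b ≠ 0) :
    Summable fun k : ℕ ↦ 1 / (a + b * k) ^ 2 := by
  refine (((summable_one_div_nat_add_rpow (a / b) 2).mpr one_lt_two).mul_left (1 / b ^ 2)).congr
    fun k ↦ ?_
  rw [rpow_two, sq_abs]
  field_simp
  ring

noncomputable def logIntegrand (p b x : ℝ) : ℝ :=
  (x ^ 2 - 1) * x ^ (p - 1) * log x / (x ^ b - 1)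

section LogIntegrand

variable {p b : ℝ}

lemma hasSum_logIntegrand (hb : 0 < b) {x : ℝ} (hx : x ∈ Ioo 0 1) :
    HasSum (fun k : ℕ ↦ (x ^ (p + b * k - 1) - x ^ (p + b * k + 1)) * log x)
      (logIntegrand p b x) := by
  obtain ⟨hx0, hx1⟩ := hx
  have hxb : x ^ b < 1 := rpow_lt_one hx0.le hx1 hb
  have hterm : ∀ k : ℕ, (x ^ b) ^ k * ((x ^ (p - 1) - x ^ (p + 1)) * log x)
      = (x ^ (p + b * k - 1) - x ^ (p + b * k + 1)) * log x := fun k ↦ by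
    rw [← rpow_natCast, ← rpow_mul hx0.le, ← mul_assoc, mul_sub, ← rpow_add hx0, ← rpow_add hx0]
    ring_nf
  have hx2 : x ^ (p + 1) = x ^ (p - 1) * x ^ 2 := by
    rw [← rpow_natCast, ← rpow_add hx0]
    norm_num
    ring_nf
  have hval : logIntegrand p b x = (1 - x ^ b)⁻¹ * ((x ^ (p - 1) - x ^ (p + 1)) * log x) := by
    have : x ^ b - 1 ≠ 0 := by linarith
    have : 1 - x ^ b ≠ 0 := by linarith
    rw [logIntegrand, hx2]
    field_simp
    ring
  rw [hval]
  exact ((hasSum_geometric_of_lt_one (by positivity) hxb).mul_right _).congr_fun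
    fun k ↦ (hterm k).symm

lemma integral_rpow_sub_rpow_mul_log_Ioo {c : ℝ} (hc : 0 < c) :
    ∫ x in Ioo 0 1, (x ^ (c - 1) - x ^ (c + 1)) * log x = 1 / (c + 2) ^ 2 - 1 / c ^ 2 := by
  have h2 : 0 < c + 2 := by linarith
  have hc1 : c + 1 = c + 2 - 1 := by ring
  simp_rw [sub_mul, hc1]
  rw [integral_sub (integrableOn_rpow_mul_log_Ioo hc) (integrableOn_rpow_mul_log_Ioo h2),
    integral_rpow_mul_log_Ioo hc, integral_rpow_mul_log_Ioo h2]
  ring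

lemma integrableOn_rpow_sub_rpow_mul_log_Ioo {c : ℝ} (hc : 0 < c) :
    IntegrableOn (fun x : ℝ ↦ (x ^ (c - 1) - x ^ (c + 1)) * log x) (Ioo 0 1) := by
  have hc1 : c + 1 = c + 2 - 1 := by ring
  simp_rw [sub_mul, hc1]
  exact (integrableOn_rpow_mul_log_Ioo hc).sub (integrableOn_rpow_mul_log_Ioo (by linarith))

lemma rpow_sub_rpow_mul_log_nonpos {c x : ℝ} (hx : x ∈ Ioo 0 1) :
    (x ^ (c - 1) - x ^ (c + 1)) * log x ≤ 0 :=
  mul_nonpos_of_nonneg_of_nonpos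
    (sub_nonneg.mpr (rpow_le_rpow_of_exponent_ge hx.1 hx.2.le (by linarith)))
    (log_nonpos hx.1.le hx.2.le)

lemma hasSum_integral_logIntegrand (hp : 0 < p) (hb : 0 < b) :
    HasSum (fun k : ℕ ↦ 1 / (p + 2 + b * k) ^ 2 - 1 / (p + b * k) ^ 2)
      (∫ x in Ioo 0 1, logIntegrand p b x) := by
  have hc : ∀ k : ℕ, 0 < p + b * k := fun k ↦ by positivity
  have hF : ∀ k : ℕ, ∫ x in Ioo 0 1, (x ^ (p + b * k - 1) - x ^ (p + b * k + 1)) * log x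
      = 1 / (p + 2 + b * k) ^ 2 - 1 / (p + b * k) ^ 2 := fun k ↦ by
    rw [integral_rpow_sub_rpow_mul_log_Ioo (hc k), add_right_comm]
  have hF_norm : ∀ k : ℕ,
      ∫ x in Ioo 0 1, ‖(x ^ (p + b * k - 1) - x ^ (p + b * k + 1)) * log x‖
        = 1 / (p + b * k) ^ 2 - 1 / (p + 2 + b * k) ^ 2 := fun k ↦ by
    rw [setIntegral_congr_fun measurableSet_Ioo
      fun x hx ↦ Real.norm_of_nonpos (rpow_sub_rpow_mul_log_nonpos hx), integral_neg, hF, neg_sub]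
  have hsum := hasSum_integral_of_summable_integral_norm
    (fun k ↦ integrableOn_rpow_sub_rpow_mul_log_Ioo (hc k)) (by
      simp_rw [hF_norm]
      exact (summable_one_div_add_mul_sq p hb.ne').sub
        (summable_one_div_add_mul_sq (p + 2) hb.ne'))
  simp_rw [hF] at hsum
  rwa [setIntegral_congr_fun measurableSet_Ioo fun x hx ↦ (hasSum_logIntegrand hb hx).tsum_eq]
    at hsum

lemma integrableOn_logIntegrand_Ioo (hp : 0 < p) (hb : 2 ≤ b) :
    IntegrableOn (logIntegrand p b) (Ioo 0 1) := by
  have hmeas : Measurable (logIntegrand p b) := by unfold logIntegrand; fun_prop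
  refine (integrableOn_rpow_mul_log_Ioo hp).norm.mono' hmeas.aestronglyMeasurable
    ((ae_restrict_iff' measurableSet_Ioo).mpr (ae_of_all _ fun x ⟨hx0, hx1⟩ ↦ ?_))
  have hxb : x ^ b ≤ x ^ 2 := by
    simpa using rpow_le_rpow_of_exponent_ge hx0 hx1.le hb
  have hx2 : x ^ 2 < 1 := by nlinarith
  have hratio : ‖(x ^ 2 - 1) / (x ^ b - 1)‖ ≤ 1 := by
    rw [norm_div, div_le_one (by simp; linarith), Real.norm_of_nonpos (by linarith),
      Real.norm_of_nonpos (by linarith)]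
    linarith
  calc ‖logIntegrand p b x‖ = ‖x ^ (p - 1) * log x‖ * ‖(x ^ 2 - 1) / (x ^ b - 1)‖ := by
        rw [← norm_mul, logIntegrand]; ring_nf
    _ ≤ ‖x ^ (p - 1) * log x‖ := mul_le_of_le_one_right (norm_nonneg _) hratio

lemma logIntegrand_inv (p b : ℝ) {x : ℝ} (hx : 0 < x) :
    (x ^ 2)⁻¹ * logIntegrand p b x⁻¹ = -logIntegrand (b - p - 2) b x := by
  have hpow : x ^ (b - p - 2 - 1) = x ^ b / x ^ (p - 1) / x ^ 4 := by
    rw [show b - p - 2 - 1 = b - (p - 1) - (4 : ℕ) by push_cast; ring, rpow_sub hx, rpow_sub hx,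
      rpow_natCast]
  simp only [logIntegrand, hpow, inv_rpow hx.le, log_inv]
  rcases eq_or_ne (x ^ b) 1 with h | h
  · simp [h]
  · have h' : (x ^ b)⁻¹ - 1 ≠ 0 := by simpa [sub_eq_zero] using h
    have h'' : x ^ b - 1 ≠ 0 := sub_ne_zero.mpr h
    have : x ^ (p - 1) ≠ 0 := (rpow_pos_of_pos hx _).ne'
    have : x ^ b ≠ 0 := (rpow_pos_of_pos hx _).ne'
    field_simp
    ring

end LogIntegrand

lemma image_inv_Ioo_zero_one : (fun x : ℝ ↦ x⁻¹) '' Ioo 0 1 = Ioi 1 := by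
  ext y
  constructor
  · rintro ⟨x, ⟨hx0, hx1⟩, rfl⟩
    exact (one_lt_inv₀ hx0).mpr hx1
  · intro hy
    exact ⟨y⁻¹, ⟨inv_pos.mpr (zero_lt_one.trans hy), inv_lt_one_of_one_lt₀ hy⟩, inv_inv y⟩

section Inversion

variable {E : Type*} [NormedAddCommGroup E] [NormedSpace ℝ E]

lemma integral_Ioi_one_eq_integral_Ioo_inv (g : ℝ → E) :
    ∫ x in Ioi 1, g x = ∫ x in Ioo 0 1, (x ^ 2)⁻¹ • g x⁻¹ := by
  rw [← image_inv_Ioo_zero_one, integral_image_eq_integral_abs_deriv_smul measurableSet_Ioo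
    (fun x hx ↦ (hasDerivAt_inv hx.1.ne').hasDerivWithinAt) inv_injective.injOn]
  simp only [abs_neg, abs_inv, abs_pow, sq_abs]

lemma integrableOn_Ioi_one_iff_integrableOn_Ioo_inv (g : ℝ → E) :
    IntegrableOn g (Ioi 1) ↔ IntegrableOn (fun x ↦ (x ^ 2)⁻¹ • g x⁻¹) (Ioo 0 1) := by
  rw [← image_inv_Ioo_zero_one, integrableOn_image_iff_integrableOn_abs_deriv_smul
    measurableSet_Ioo (fun x hx ↦ (hasDerivAt_inv hx.1.ne').hasDerivWithinAt) inv_injective.injOn]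
  simp only [abs_neg, abs_inv, abs_pow, sq_abs]

end Inversion

lemma integral_logIntegrand_Ioi_zero {p b : ℝ} (hp : 0 < p) (hpb : p + 2 < b) :
    ∫ x in Ioi 0, logIntegrand p b x
      = (∫ x in Ioo 0 1, logIntegrand p b x) - ∫ x in Ioo 0 1, logIntegrand (b - p - 2) b x := by
  have hinv : EqOn (fun x ↦ (x ^ 2)⁻¹ • logIntegrand p b x⁻¹)
      (fun x ↦ -logIntegrand (b - p - 2) b x) (Ioo 0 1) := fun x hx ↦ logIntegrand_inv p b hx.1
  have hIoi : IntegrableOn (logIntegrand p b) (Ioi 1) :=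
    (integrableOn_Ioi_one_iff_integrableOn_Ioo_inv _).mpr <|
      (integrableOn_logIntegrand_Ioo (by linarith) (by linarith)).neg.congr_fun hinv.symm
        measurableSet_Ioo
  rw [← Ioc_union_Ioi_eq_Ioi zero_le_one, setIntegral_union Ioc_disjoint_Ioi_same measurableSet_Ioi
      ((integrableOn_Ioc_iff_integrableOn_Ioo).mpr (integrableOn_logIntegrand_Ioo hp (by linarith)))
      hIoi,
    integral_Ioc_eq_integral_Ioo, integral_Ioi_one_eq_integral_Ioo_inv,
    setIntegral_congr_fun measurableSet_Ioo hinv, integral_neg, ← sub_eq_add_neg]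

lemma fourierCoeffOn_exp_two_pi_I_mul {c : ℝ} {i : ℤ} (hi : c ≠ i) :
    fourierCoeffOn zero_lt_one (fun x : ℝ ↦ Complex.exp (2 * π * Complex.I * c * x)) i
      = (Complex.exp (2 * π * Complex.I * c) - 1) / (2 * π * Complex.I * (c - i)) := by
  have hci : (c : ℂ) - i ≠ 0 := by exact_mod_cast sub_ne_zero.mpr hi
  have hne : 2 * π * Complex.I * (c - i) ≠ 0 := by simp [hci, pi_ne_zero, Complex.I_ne_zero]
  have hexp : ∀ x : ℝ, 2 * π * Complex.I * ↑(-i) * x / ↑(1 - 0 : ℝ) + 2 * π * Complex.I * c * x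
      = 2 * π * Complex.I * (c - i) * x := fun x ↦ by push_cast; ring
  have hper : Complex.exp (2 * π * Complex.I * (c - i) * (1 : ℝ))
      = Complex.exp (2 * π * Complex.I * c) :=
    Complex.exp_eq_exp_iff_exists_int.mpr ⟨-i, by push_cast; ring⟩
  rw [fourierCoeffOn_eq_integral _ _ zero_lt_one]
  simp_rw [fourier_coe_apply, smul_eq_mul, ← Complex.exp_add, hexp, integral_exp_mul_complex hne,
    hper]
  simp

lemma norm_exp_two_pi_I_mul_sub_one_sq (c : ℝ) :
    ‖Complex.exp (2 * π * Complex.I * c) - 1‖ ^ 2 = 4 * sin (π * c) ^ 2 := by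
  rw [show 2 * π * Complex.I * c = Complex.I * ((2 * π * c : ℝ) : ℂ) by push_cast; ring,
    Complex.norm_exp_I_mul_ofReal_sub_one, norm_mul, mul_pow, Real.norm_eq_abs, sq_abs]
  norm_num
  ring_nf

lemma sq_norm_fourierCoeffOn_exp_two_pi_I_mul {c : ℝ} {i : ℤ} (hi : c ≠ i) :
    ‖fourierCoeffOn zero_lt_one (fun x : ℝ ↦ Complex.exp (2 * π * Complex.I * c * x)) i‖ ^ 2
      = sin (π * c) ^ 2 / π ^ 2 * (1 / (c - i) ^ 2) := by
  have : c - i ≠ 0 := sub_ne_zero.mpr hi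
  rw [fourierCoeffOn_exp_two_pi_I_mul hi, norm_div, div_pow, norm_exp_two_pi_I_mul_sub_one_sq,
    show 2 * π * Complex.I * (c - i) = ((2 * π * (c - i) : ℝ) : ℂ) * Complex.I by push_cast; ring,
    norm_mul, Complex.norm_I, mul_one, Complex.norm_real, Real.norm_eq_abs, sq_abs]
  field_simp
  ring

theorem hasSum_one_div_add_int_sq {a : ℝ} (h0 : 0 < a) (h1 : a < 1) :
    HasSum (fun i : ℤ ↦ 1 / (a + i) ^ 2) (π ^ 2 / sin (π * a) ^ 2) := by
  have hsin : sin (π * a) ≠ 0 :=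
    (sin_pos_of_pos_of_lt_pi (by positivity) (by nlinarith [pi_pos])).ne'
  have hai : ∀ i : ℤ, -a ≠ i := fun i hi ↦ by
    rcases le_or_gt 0 i with h | h
    · have : (0 : ℝ) ≤ i := by exact_mod_cast h
      linarith
    · have : (i : ℝ) ≤ -1 := by exact_mod_cast (show i ≤ -1 by omega)
      linarith
  set f : ℝ → ℂ := fun x ↦ Complex.exp (2 * π * Complex.I * (-a : ℝ) * x)
  have hf : ∀ x : ℝ, ‖f x‖ = 1 := fun x ↦ by
    simp only [f]
    rw [show 2 * π * Complex.I * (-a : ℝ) * x = ((-2 * π * a * x : ℝ) : ℂ) * Complex.I by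
      push_cast; ring, Complex.norm_exp_ofReal_mul_I]
  have hL2 : MemLp f 2 (volume.restrict (Ioc 0 1)) :=
    MemLp.of_bound (by fun_prop) 1 (ae_of_all _ fun x ↦ (hf x).le)
  have hParseval := hasSum_sq_fourierCoeffOn zero_lt_one hL2
  simp only [hf, one_pow, intervalIntegral.integral_const, sub_zero, inv_one, smul_eq_mul,
    mul_one] at hParseval
  have hcoeff : ∀ i : ℤ, ‖fourierCoeffOn zero_lt_one f i‖ ^ 2
      = sin (π * a) ^ 2 / π ^ 2 * (1 / (a + i) ^ 2) := fun i ↦ by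
    rw [sq_norm_fourierCoeffOn_exp_two_pi_I_mul (hai i), mul_neg, sin_neg, neg_sq,
      show (-a - i) ^ 2 = (a + i) ^ 2 by ring]
  simp_rw [hcoeff] at hParseval
  have hcancel : ∀ i : ℤ, π ^ 2 / sin (π * a) ^ 2 * (sin (π * a) ^ 2 / π ^ 2 * (1 / (a + i) ^ 2))
      = 1 / (a + i) ^ 2 := fun i ↦ by field_simp
  have h := hParseval.mul_left (π ^ 2 / sin (π * a) ^ 2)
  rw [mul_one] at h
  exact h.congr_fun fun i ↦ (hcancel i).symm

theorem hasSum_one_div_add_mul_sq_add_one_div_sub_add_mul_sq {a b : ℝ} (ha : 0 < a)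
    (hab : a < b) :
    HasSum (fun k : ℕ ↦ 1 / (a + b * k) ^ 2 + 1 / (b - a + b * k) ^ 2)
      (π ^ 2 / b ^ 2 / sin (π * a / b) ^ 2) := by
  have hb : 0 < b := ha.trans hab
  have h := ((hasSum_one_div_add_int_sq (div_pos ha hb) ((div_lt_one hb).mpr hab)
    ).nat_add_neg_add_one).mul_left (1 / b ^ 2)
  rw [show π ^ 2 / b ^ 2 / sin (π * a / b) ^ 2 = 1 / b ^ 2 * (π ^ 2 / sin (π * (a / b)) ^ 2) by
    rw [mul_div_assoc]; field_simp]
  refine h.congr_fun fun k ↦ ?_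
  push_cast
  field_simp
  ring

theorem gr_4_235_2_general (m n : ℝ) (hm : 0 < m) (h : m + 2 < 2*n) :
    ∫ x in Ioi (0:ℝ), (x^2 - 1) * x ^ (m - 1) * Real.log x / (x ^ (2*n) - 1)
      = -(π^2 / (4*n^2)) *
        (1 / (Real.sin (π*m/(2*n)))^2 - 1 / (Real.sin (π*(m+2)/(2*n)))^2) := by
  have hb : 0 < 2 * n := by linarith
  have hq : 0 < 2 * n - m - 2 := by linarith
  change ∫ x in Ioi 0, logIntegrand m (2 * n) x = _
  rw [integral_logIntegrand_Ioi_zero hm h]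
  refine ((hasSum_integral_logIntegrand hm hb).sub (hasSum_integral_logIntegrand hq hb)).unique ?_
  convert (hasSum_one_div_add_mul_sq_add_one_div_sub_add_mul_sq (by linarith) h).sub
    (hasSum_one_div_add_mul_sq_add_one_div_sub_add_mul_sq (b := 2 * n) hm (by linarith)) using 1
  · ext k
    ring_nf
  · ring

theorem gr_4_235_2 (m n : ℝ) (hm : 0 < m) (hmn : m < n) (h : m + 2 < 2*n) :
    ∫ x in Ioi (0:ℝ), (x^2 - 1) * x ^ (m - 1) * Real.log x / (x ^ (2*n) - 1)
      = -(π^2 / (4*n^2)) *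
        (1 / (Real.sin (π*m/(2*n)))^2 - 1 / (Real.sin (π*(m+2)/(2*n)))^2) :=
  gr_4_235_2_general m n hm h
end

section
/- For all real a > 0 and real n, m, l with l > 0 and -1/2 < m, n < l - 1/2, the improper integral satisfies ∫₀^∞ (x^(2n) - x^(2m))·log(a·x²)/(x^(2l) - 1) dx = log(a)·(π/(2l))·(cot((2m+1)π/(2l)) - cot((2n+1)π/(2l))) + (π²/(2l²))·(csc²((2n+1)π/(2l)) - csc²((2m+1)π/(2l))). -/
open Real MeasureTheory Set Filter Topology

namespace AScaling

noncomputable def j1 (c d : ℝ) : ℝ → ℝ := fun t => (t ^ (c-1) - t ^ (d-1)) / (t - 1)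
noncomputable def j2 (c : ℝ) : ℝ → ℝ := fun t => t ^ (c-1) * Real.log t / (t - 1)
noncomputable def ja (c : ℝ) : ℝ → ℝ := fun t => t ^ (c-1) / (1 + t)

lemma j1_meas (c d : ℝ) : Measurable (j1 c d) := by unfold j1; measurability

lemma j2_meas (c : ℝ) : Measurable (j2 c) := by unfold j2; measurability

lemma ja_meas (c : ℝ) : Measurable (ja c) :=
  Measurable.div (by measurability) (measurable_const.add measurable_id)

/-- the three-region bound function -/
noncomputable def bnd (p q C1 C2 C3 : ℝ) : ℝ → ℝ := fun t =>
  (Ioo (0:ℝ) (1/2)).indicator (fun t => C1 * t ^ p) t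
  + (Icc (1/2:ℝ) 2).indicator (fun _ => C2) t
  + (Ioi (2:ℝ)).indicator (fun t => C3 * t ^ q) t

lemma bnd_integrable {p q : ℝ} (hp : -1 < p) (hq : q < -1) (C1 C2 C3 : ℝ) :
    Integrable (bnd p q C1 C2 C3) := by
  apply Integrable.add
  apply Integrable.add
  · refine IntegrableOn.integrable_indicator ?_ measurableSet_Ioo
    exact IntegrableOn.mono_set
      (((intervalIntegral.integrableOn_Ioo_rpow_iff (by norm_num : (0:ℝ) < 1)).2 hp).const_mul C1)
      (by intro x hx; exact ⟨hx.1, by linarith [hx.2]⟩)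
  · exact (integrableOn_const (by simp) (by simp)).integrable_indicator measurableSet_Icc
  · refine IntegrableOn.integrable_indicator ?_ measurableSet_Ioi
    exact (integrableOn_Ioi_rpow_of_lt hq (by norm_num)).const_mul C3

lemma le_bnd {f : ℝ → ℝ} {p q C1 C2 C3 : ℝ} (hC1 : 0 ≤ C1) (hC2 : 0 ≤ C2) (hC3 : 0 ≤ C3)
    (h1 : ∀ t : ℝ, 0 < t → t < 1/2 → |f t| ≤ C1 * t ^ p)
    (h2 : ∀ t : ℝ, 1/2 ≤ t → t ≤ 2 → t ≠ 1 → |f t| ≤ C2)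
    (h3 : ∀ t : ℝ, 2 < t → |f t| ≤ C3 * t ^ q)
    {t : ℝ} (ht : 0 < t) (htne : t ≠ 1) : |f t| ≤ bnd p q C1 C2 C3 t := by
  have e1 : 0 ≤ (Ioo (0:ℝ) (1/2)).indicator (fun t => C1 * t ^ p) t := by
    apply Set.indicator_nonneg; intro a ha; have := ha.1; positivity
  have e2 : 0 ≤ (Icc (1/2:ℝ) 2).indicator (fun _ => C2) t := by
    apply Set.indicator_nonneg; intro a _; exact hC2
  have e3 : 0 ≤ (Ioi (2:ℝ)).indicator (fun t => C3 * t ^ q) t := by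
    apply Set.indicator_nonneg; intro a ha; have : (0:ℝ) < a := lt_trans (by norm_num) ha; positivity
  unfold bnd
  rcases lt_or_ge t (1/2) with h | h
  · have m1 : t ∈ Ioo (0:ℝ) (1/2) := ⟨ht, h⟩
    rw [Set.indicator_of_mem m1]
    have := h1 t ht h; linarith
  · rcases le_or_gt t 2 with h' | h'
    · have m1 : t ∈ Icc (1/2:ℝ) 2 := ⟨h, h'⟩
      rw [Set.indicator_of_mem m1]
      have := h2 t h h' htne; linarith
    · have m1 : t ∈ Ioi (2:ℝ) := mem_Ioi.2 h'
      rw [Set.indicator_of_mem m1]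
      have := h3 t h'; linarith

lemma ae_ne_one : ∀ᵐ (t : ℝ) ∂(volume.restrict (Ioi (0:ℝ))), t ≠ 1 := by
  refine ae_restrict_of_ae ?_
  rw [ae_iff]
  have : {a : ℝ | ¬ a ≠ 1} = {(1:ℝ)} := by ext a; simp
  rw [this]; exact Real.volume_singleton

lemma integrableOn_of_bnd {f : ℝ → ℝ} {p q C1 C2 C3 : ℝ}
    (hmeas : AEStronglyMeasurable f (volume.restrict (Ioi (0:ℝ))))
    (hp : -1 < p) (hq : q < -1) (hC1 : 0 ≤ C1) (hC2 : 0 ≤ C2) (hC3 : 0 ≤ C3)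
    (h1 : ∀ t : ℝ, 0 < t → t < 1/2 → |f t| ≤ C1 * t ^ p)
    (h2 : ∀ t : ℝ, 1/2 ≤ t → t ≤ 2 → t ≠ 1 → |f t| ≤ C2)
    (h3 : ∀ t : ℝ, 2 < t → |f t| ≤ C3 * t ^ q) :
    IntegrableOn f (Ioi (0:ℝ)) := by
  refine Integrable.mono' ((bnd_integrable hp hq C1 C2 C3).restrict) hmeas ?_
  filter_upwards [ae_ne_one, ae_restrict_mem measurableSet_Ioi] with t htne ht
  exact le_bnd hC1 hC2 hC3 h1 h2 h3 ht htne


lemma exp_sub_exp_le {u v : ℝ} (h : v ≤ u) : Real.exp u - Real.exp v ≤ (u - v) * Real.exp u := by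
  have h1 := Real.add_one_le_exp (v - u)
  have h2 : Real.exp v = Real.exp u * Real.exp (v - u) := by rw [← Real.exp_add]; ring_nf
  nlinarith [Real.exp_pos u]

lemma abs_rpow_sub_rpow_le {t c d : ℝ} (ht : 0 < t) (hdc : d ≤ c) :
    |t ^ (c-1) - t ^ (d-1)| ≤ (c - d) * |Real.log t| * max (t ^ (c-1)) (t ^ (d-1)) := by
  have e1 : t ^ (c-1) = Real.exp ((c-1) * Real.log t) := by
    rw [Real.rpow_def_of_pos ht, mul_comm]
  have e2 : t ^ (d-1) = Real.exp ((d-1) * Real.log t) := by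
    rw [Real.rpow_def_of_pos ht, mul_comm]
  rw [e1, e2]
  set L := Real.log t with hLdef
  rcases le_or_gt 0 L with h | h
  · have huv : (d-1)*L ≤ (c-1)*L := by nlinarith
    have key := exp_sub_exp_le huv
    rw [abs_of_nonneg (sub_nonneg.2 (Real.exp_le_exp.2 huv)), abs_of_nonneg h]
    have hmax : Real.exp ((c-1)*L) ≤ max (Real.exp ((c-1)*L)) (Real.exp ((d-1)*L)) :=
      le_max_left _ _
    have hcd : 0 ≤ (c - d) * L := by nlinarith
    nlinarith [Real.exp_pos ((c-1)*L)]
  · have huv : (c-1)*L ≤ (d-1)*L := by nlinarith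
    have key := exp_sub_exp_le huv
    rw [abs_of_nonpos (sub_nonpos.2 (Real.exp_le_exp.2 huv)), abs_of_neg h]
    have hmax : Real.exp ((d-1)*L) ≤ max (Real.exp ((c-1)*L)) (Real.exp ((d-1)*L)) :=
      le_max_right _ _
    have hcd : 0 ≤ (c - d) * (-L) := by nlinarith
    nlinarith [Real.exp_pos ((d-1)*L)]

lemma neg_log_le_rpow {δ t : ℝ} (hδ : 0 < δ) (ht : 0 < t) :
    -Real.log t ≤ t ^ (-δ) / δ := by
  have h1 : Real.log (t ^ (-δ)) ≤ t ^ (-δ) - 1 :=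
    Real.log_le_sub_one_of_pos (Real.rpow_pos_of_pos ht _)
  rw [Real.log_rpow ht] at h1
  have h2 : 0 < t ^ (-δ) := Real.rpow_pos_of_pos ht _
  rw [le_div_iff₀ hδ]; nlinarith

lemma log_le_rpow {δ t : ℝ} (hδ : 0 < δ) (ht : 1 ≤ t) : Real.log t ≤ t ^ δ / δ := by
  have ht0 : (0:ℝ) < t := lt_of_lt_of_le one_pos ht
  have h1 : Real.log (t ^ δ) ≤ t ^ δ - 1 :=
    Real.log_le_sub_one_of_pos (Real.rpow_pos_of_pos ht0 _)
  rw [Real.log_rpow ht0] at h1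
  have h2 : 0 < t ^ δ := Real.rpow_pos_of_pos ht0 _
  rw [le_div_iff₀ hδ]; nlinarith

lemma abs_log_le_two_mul {t : ℝ} (h : 1/2 ≤ t) (h2 : t ≤ 2) : |Real.log t| ≤ 2 * |t - 1| := by
  have ht0 : (0:ℝ) < t := by linarith
  rcases le_or_gt 1 t with h1 | h1
  · rw [abs_of_nonneg (Real.log_nonneg h1), abs_of_nonneg (by linarith)]
    have := Real.log_le_sub_one_of_pos ht0
    linarith
  · rw [abs_of_nonpos (Real.log_nonpos ht0.le h1.le), abs_of_neg (by linarith)]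
    have hinv : Real.log t⁻¹ ≤ t⁻¹ - 1 := Real.log_le_sub_one_of_pos (by positivity)
    rw [Real.log_inv] at hinv
    have h4 : t⁻¹ - 1 ≤ 2*(1-t) := by
      rw [sub_le_iff_le_add, inv_le_iff_one_le_mul₀ ht0]; nlinarith
    linarith

lemma rpow_le_two_of {t e : ℝ} (ht : 1/2 ≤ t) (he : -1 ≤ e) (he0 : e ≤ 0) : t ^ e ≤ 2 := by
  have ht0 : (0:ℝ) < t := by linarith
  rcases le_or_gt 1 t with h1 | h1
  · have h2 : t ^ e ≤ t ^ (0:ℝ) := Real.rpow_le_rpow_of_exponent_le h1 he0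
    rw [Real.rpow_zero] at h2; linarith
  · have h2 : t ^ e ≤ t ^ (-1:ℝ) := Real.rpow_le_rpow_of_exponent_ge ht0 h1.le he
    rw [Real.rpow_neg_one] at h2
    have h3 : t⁻¹ ≤ 2 := by rw [inv_le_comm₀ ht0 (by norm_num)]; linarith
    linarith

lemma intJ1' {c d : ℝ} (hd : 0 < d) (hc : c < 1) (hdc : d ≤ c) :
    IntegrableOn (j1 c d) (Ioi (0:ℝ)) := by
  have habs : ∀ t : ℝ, |j1 c d t| = |t ^ (c-1) - t ^ (d-1)| / |t-1| := by
    intro t; rw [j1]; exact abs_div _ _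
  apply integrableOn_of_bnd (f := j1 c d) (p := d - 1) (q := c - 2)
    ((j1_meas c d).aestronglyMeasurable) (by linarith) (by linarith)
    (by norm_num : (0:ℝ) ≤ 4) (by nlinarith : (0:ℝ) ≤ 4*(c-d)) (by norm_num : (0:ℝ) ≤ 4)
  · intro t ht ht2
    rw [habs]
    have ht1 : t ≤ 1 := by linarith
    have hnum : |t ^ (c-1) - t ^ (d-1)| ≤ 2 * t ^ (d-1) := by
      have h1 : t ^ (c-1) ≤ t ^ (d-1) := Real.rpow_le_rpow_of_exponent_ge ht ht1 (by linarith)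
      have h2 : (0:ℝ) < t ^ (c-1) := Real.rpow_pos_of_pos ht _
      have h3 : (0:ℝ) < t ^ (d-1) := Real.rpow_pos_of_pos ht _
      rw [abs_of_nonpos (by linarith)]; linarith
    have hden : (1:ℝ)/2 ≤ |t - 1| := by rw [abs_of_neg (by linarith)]; linarith
    calc |t ^ (c-1) - t ^ (d-1)| / |t-1| ≤ (2 * t ^ (d-1)) / (1/2) :=
          div_le_div₀ (by positivity) hnum (by norm_num) hden
      _ = 4 * t ^ (d-1) := by ring
  · intro t ht ht2 htne
    rw [habs]
    have ht0 : (0:ℝ) < t := by linarith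
    have hne : (0:ℝ) < |t - 1| := abs_pos.2 (sub_ne_zero.2 htne)
    have hmax : max (t ^ (c-1)) (t ^ (d-1)) ≤ 2 := by
      apply max_le <;> exact rpow_le_two_of ht (by linarith) (by linarith)
    have hnum : |t ^ (c-1) - t ^ (d-1)| ≤ (c-d) * (2*|t-1|) * 2 := by
      refine le_trans (abs_rpow_sub_rpow_le ht0 hdc) ?_
      have h1 := abs_log_le_two_mul ht ht2
      have h2 : (0:ℝ) ≤ max (t ^ (c-1)) (t ^ (d-1)) :=
        le_max_of_le_left (Real.rpow_pos_of_pos ht0 _).le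
      have h3 : (0:ℝ) ≤ |Real.log t| := abs_nonneg _
      have k1 : (c-d)*|Real.log t| ≤ (c-d)*(2*|t-1|) :=
        mul_le_mul_of_nonneg_left h1 (by linarith)
      exact mul_le_mul k1 hmax h2 (mul_nonneg (by linarith) (by positivity))
    have h5 : |t ^ (c-1) - t ^ (d-1)| / |t-1| ≤ ((c-d) * (2*|t-1|) * 2) / |t-1| :=
      (div_le_div_iff_of_pos_right hne).2 hnum
    have h6 : ((c-d) * (2*|t-1|) * 2) / |t-1| = 4*(c-d) := by field_simp; ring
    linarith [h5, h6.le, h6.ge]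
  · intro t ht
    rw [habs]
    have ht0 : (0:ℝ) < t := by linarith
    have ht1 : (1:ℝ) ≤ t := by linarith
    have hnum : |t ^ (c-1) - t ^ (d-1)| ≤ 2 * t ^ (c-1) := by
      have h1 : t ^ (d-1) ≤ t ^ (c-1) := Real.rpow_le_rpow_of_exponent_le ht1 (by linarith)
      have h2 : (0:ℝ) < t ^ (c-1) := Real.rpow_pos_of_pos ht0 _
      have h3 : (0:ℝ) < t ^ (d-1) := Real.rpow_pos_of_pos ht0 _
      rw [abs_of_nonneg (by linarith)]; linarith
    have hden : t/2 ≤ |t - 1| := by rw [abs_of_pos (by linarith)]; linarith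
    have hrw : 4 * t ^ (c-2) = (2 * t ^ (c-1)) / (t/2) := by
      have h7 : t ^ (c-2) = t ^ (c-1) / t := by
        rw [show c-2 = c-1-1 by ring, Real.rpow_sub ht0, Real.rpow_one]
      rw [h7]; field_simp; ring
    rw [hrw]
    exact div_le_div₀ (by positivity) hnum (by linarith) hden

lemma intJ1 {c d : ℝ} (hc : c ∈ Ioo (0:ℝ) 1) (hd : d ∈ Ioo (0:ℝ) 1) :
    IntegrableOn (j1 c d) (Ioi (0:ℝ)) := by
  rcases le_total d c with h | h
  · exact intJ1' hd.1 hc.2 h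
  · have heq : j1 c d = fun t => - j1 d c t := by
      funext t; rw [j1, j1]; ring
    rw [heq]
    exact (intJ1' hc.1 hd.2 h).neg

lemma intJ2 {c : ℝ} (hc : c ∈ Ioo (0:ℝ) 1) : IntegrableOn (j2 c) (Ioi (0:ℝ)) := by
  obtain ⟨hc0, hc1⟩ := hc
  have habs : ∀ t : ℝ, 0 < t → |j2 c t| = t ^ (c-1) * |Real.log t| / |t-1| := by
    intro t ht
    rw [j2, abs_div, abs_mul, abs_of_nonneg (Real.rpow_nonneg ht.le _)]
  apply integrableOn_of_bnd (f := j2 c) (p := c/2 - 1) (q := (c-3)/2)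
    ((j2_meas c).aestronglyMeasurable) (by linarith) (by linarith)
    (by positivity : (0:ℝ) ≤ 4/c) (by norm_num : (0:ℝ) ≤ 4)
    (by have : 0 < 1 - c := by linarith
        positivity : (0:ℝ) ≤ 4/(1-c))
  · intro t ht ht2
    rw [habs t ht]
    have ht1 : t ≤ 1 := by linarith
    have hpow : (0:ℝ) < t ^ (c-1) := Real.rpow_pos_of_pos ht _
    have hlog : |Real.log t| ≤ t ^ (-(c/2)) / (c/2) := by
      rw [abs_of_nonpos (Real.log_nonpos ht.le ht1)]
      exact neg_log_le_rpow (by linarith) ht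
    have hden : (1:ℝ)/2 ≤ |t - 1| := by rw [abs_of_neg (by linarith)]; linarith
    have hnum : t ^ (c-1) * |Real.log t| ≤ t ^ (c-1) * (t ^ (-(c/2)) / (c/2)) :=
      mul_le_mul_of_nonneg_left hlog hpow.le
    calc t ^ (c-1) * |Real.log t| / |t-1| ≤ (t ^ (c-1) * (t ^ (-(c/2)) / (c/2))) / (1/2) :=
          div_le_div₀ (by positivity) hnum (by norm_num) hden
      _ = (4/c) * (t ^ (c-1) * t ^ (-(c/2))) := by ring
      _ = (4/c) * t ^ (c/2 - 1) := by
          rw [← Real.rpow_add ht]; congr 1; ring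
  · intro t ht ht2 htne
    rw [habs t (by linarith)]
    have ht0 : (0:ℝ) < t := by linarith
    have hne : (0:ℝ) < |t - 1| := abs_pos.2 (sub_ne_zero.2 htne)
    have hpow : t ^ (c-1) ≤ 2 := rpow_le_two_of ht (by linarith) (by linarith)
    have hpow0 : (0:ℝ) < t ^ (c-1) := Real.rpow_pos_of_pos ht0 _
    have hlog := abs_log_le_two_mul ht ht2
    have hnum : t ^ (c-1) * |Real.log t| ≤ 2 * (2 * |t-1|) := by
      have : (0:ℝ) ≤ |Real.log t| := abs_nonneg _
      nlinarith
    have h5 : t ^ (c-1) * |Real.log t| / |t-1| ≤ (2*(2*|t-1|))/|t-1| :=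
      (div_le_div_iff_of_pos_right hne).2 hnum
    have h6 : (2*(2*|t-1|))/|t-1| = 4 := by field_simp; ring
    linarith
  · intro t ht
    rw [habs t (by linarith)]
    have ht0 : (0:ℝ) < t := by linarith
    have ht1 : (1:ℝ) ≤ t := by linarith
    set δ := (1-c)/2 with hδdef
    have hδ : 0 < δ := by rw [hδdef]; linarith
    have hpow : (0:ℝ) < t ^ (c-1) := Real.rpow_pos_of_pos ht0 _
    have hlog : |Real.log t| ≤ t ^ δ / δ := by
      rw [abs_of_nonneg (Real.log_nonneg ht1)]
      exact log_le_rpow hδ ht1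
    have hden : t/2 ≤ |t - 1| := by rw [abs_of_pos (by linarith)]; linarith
    have hnum : t ^ (c-1) * |Real.log t| ≤ t ^ (c-1) * (t ^ δ / δ) :=
      mul_le_mul_of_nonneg_left hlog hpow.le
    calc t ^ (c-1) * |Real.log t| / |t-1| ≤ (t ^ (c-1) * (t ^ δ / δ)) / (t/2) :=
          div_le_div₀ (by positivity) hnum (by linarith) hden
      _ = (2/δ) * (t ^ (c-1) * t ^ δ / t) := by field_simp
      _ = (2/δ) * (t ^ (c-1+δ) / t ^ (1:ℝ)) := by rw [← Real.rpow_add ht0, Real.rpow_one]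
      _ = (2/δ) * t ^ (c-1+δ-1) := by rw [← Real.rpow_sub ht0]
      _ = (4/(1-c)) * t ^ ((c-3)/2) := by
          rw [hδdef]; congr 1
          · rw [div_div_eq_mul_div]; norm_num
          · congr 1; ring
  
lemma intJA {c : ℝ} (hc : c ∈ Ioo (0:ℝ) 1) : IntegrableOn (ja c) (Ioi (0:ℝ)) := by
  obtain ⟨hc0, hc1⟩ := hc
  have habs : ∀ t : ℝ, 0 < t → |ja c t| = t ^ (c-1) / (1+t) := by
    intro t ht
    rw [ja, abs_div, abs_of_nonneg (Real.rpow_nonneg ht.le _), abs_of_pos (by linarith)]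
  apply integrableOn_of_bnd (f := ja c) (p := c - 1) (q := c - 2)
    ((ja_meas c).aestronglyMeasurable) (by linarith) (by linarith)
    (by norm_num : (0:ℝ) ≤ 1) (by norm_num : (0:ℝ) ≤ 2) (by norm_num : (0:ℝ) ≤ 1)
  · intro t ht ht2
    rw [habs t ht]
    have hpow : (0:ℝ) < t ^ (c-1) := Real.rpow_pos_of_pos ht _
    have : t ^ (c-1) / (1+t) ≤ t ^ (c-1) / 1 := by
      apply div_le_div_of_nonneg_left hpow.le one_pos; linarith
    simpa using this.trans_eq (by ring)
  · intro t ht ht2 htne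
    rw [habs t (by linarith)]
    have hpow : t ^ (c-1) ≤ 2 := rpow_le_two_of ht (by linarith) (by linarith)
    have hpow0 : (0:ℝ) < t ^ (c-1) := Real.rpow_pos_of_pos (by linarith) _
    have h1 : t ^ (c-1) / (1+t) ≤ t ^ (c-1) / 1 := by
      apply div_le_div_of_nonneg_left hpow0.le one_pos; linarith
    simp at h1; linarith
  · intro t ht
    have ht0 : (0:ℝ) < t := by linarith
    rw [habs t ht0]
    have hpow : (0:ℝ) < t ^ (c-1) := Real.rpow_pos_of_pos ht0 _
    have h1 : t ^ (c-1) / (1+t) ≤ t ^ (c-1) / t := by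
      apply div_le_div_of_nonneg_left hpow.le ht0; linarith
    have h2 : t ^ (c-1) / t = t ^ (c-2) := by
      rw [show c-2 = c-1-1 by ring, Real.rpow_sub ht0 (c-1) 1, Real.rpow_one]
    rw [h2] at h1
    simpa using h1

noncomputable def J1 (c d : ℝ) : ℝ := ∫ t in Ioi (0:ℝ), j1 c d t
noncomputable def J2 (c : ℝ) : ℝ := ∫ t in Ioi (0:ℝ), j2 c t
noncomputable def JA (c : ℝ) : ℝ := ∫ t in Ioi (0:ℝ), ja c t

lemma J1_antisymm (c d : ℝ) : J1 c d = - J1 d c := by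
  have h : ∀ t : ℝ, j1 c d t = -(j1 d c t) := by
    intro t; rw [j1, j1]; ring
  rw [J1, J1]
  simp_rw [h]
  exact integral_neg _

lemma J1_self (c : ℝ) : J1 c c = 0 := by
  have h : ∀ t : ℝ, j1 c c t = 0 := by intro t; rw [j1]; simp
  rw [J1]; simp_rw [h]; simp

lemma J1_cocycle {c d e : ℝ} (hc : c ∈ Ioo (0:ℝ) 1) (hd : d ∈ Ioo (0:ℝ) 1)
    (he : e ∈ Ioo (0:ℝ) 1) : J1 c e = J1 c d + J1 d e := by
  rw [J1, J1, J1, ← integral_add (intJ1 hc hd) (intJ1 hd he)]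
  congr 1; funext t
  rw [j1, j1, j1, ← add_div]
  congr 1; ring

lemma J1_inv {c d : ℝ} : J1 c d = J1 (1-d) (1-c) := by
  rw [J1, J1, ← integral_comp_rpow_Ioi (j1 c d) (p := -1) (by norm_num)]
  apply setIntegral_congr_fun measurableSet_Ioi
  intro x hx
  have hx0 : (0:ℝ) < x := hx
  have hE : x ^ (-1:ℝ) = x⁻¹ := Real.rpow_neg_one x
  have hA : (x ^ (-1:ℝ)) ^ (c-1) = x * x ^ (-c:ℝ) := by
    rw [← Real.rpow_mul hx0.le, show (-1:ℝ) * (c-1) = 1 + (-c) by ring,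
      Real.rpow_add hx0, Real.rpow_one]
  have hB : (x ^ (-1:ℝ)) ^ (d-1) = x * x ^ (-d:ℝ) := by
    rw [← Real.rpow_mul hx0.le, show (-1:ℝ) * (d-1) = 1 + (-d) by ring,
      Real.rpow_add hx0, Real.rpow_one]
  have hD : x ^ (-1-1:ℝ) = x⁻¹ * x⁻¹ := by
    rw [show (-1-1:ℝ) = (-1) + (-1) by ring, Real.rpow_add hx0, Real.rpow_neg_one]
  have hC : (1:ℝ) - d - 1 = -d := by ring
  have hC' : (1:ℝ) - c - 1 = -c := by ring
  simp only [smul_eq_mul, abs_neg, abs_one]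
  unfold j1
  rw [hA, hB, hD, hE, hC, hC']
  rcases eq_or_ne x 1 with rfl | hx1
  · norm_num
  · have hxne : x - 1 ≠ 0 := sub_ne_zero.2 hx1
    have hinv : x⁻¹ - 1 ≠ 0 := by
      intro h
      apply hx1
      field_simp at h
      linarith
    have h9 : x^2 - x^3 ≠ 0 := by
      have h10 : x^2 - x^3 = x^2*(1-x) := by ring
      rw [h10]
      exact mul_ne_zero (pow_ne_zero _ hx0.ne') (fun hh => hx1 (sub_eq_zero.1 hh).symm)
    have h11 : (x^2 - x^3) * (x^2-x^3)⁻¹ = 1 := mul_inv_cancel₀ h9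
    generalize x ^ (-c) = A
    generalize x ^ (-d) = B
    field_simp
    ring

lemma JA_beta {c : ℝ} (hc : c ∈ Ioo (0:ℝ) 1) :
    (∫ x in (0:ℝ)..1, x ^ (c-1) * (1-x) ^ (-c)) = π / Real.sin (π * c) := by
  obtain ⟨hc0, hc1⟩ := hc
  have hre : 0 < (c:ℂ).re := by simpa using hc0
  have hre2 : 0 < ((1:ℂ) - c).re := by simp [Complex.sub_re]; linarith
  have hbeta : Complex.betaIntegral c (1 - c) = ↑π / Complex.sin (↑π * c) := by
    have h1 := Complex.Gamma_mul_Gamma_eq_betaIntegral hre hre2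
    have h2 : (c:ℂ) + (1 - c) = 1 := by ring
    rw [h2, Complex.Gamma_one, one_mul] at h1
    rw [← h1, Complex.Gamma_mul_Gamma_one_sub]
  have hint : Complex.betaIntegral c (1 - c)
      = ((∫ x in (0:ℝ)..1, x ^ (c-1) * (1-x) ^ (-c) : ℝ) : ℂ) := by
    rw [Complex.betaIntegral, ← intervalIntegral.integral_ofReal]
    apply intervalIntegral.integral_congr
    intro x hx
    dsimp only
    rw [uIcc_of_le (by norm_num : (0:ℝ) ≤ 1)] at hx
    obtain ⟨hx0, hx1⟩ := hx
    have e1 : ((x:ℝ) : ℂ) ^ ((c:ℂ) - 1) = ((x ^ (c-1) : ℝ) : ℂ) := by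
      rw [Complex.ofReal_cpow hx0]
      push_cast
      ring_nf
    have e2 : ((1:ℂ) - (x:ℝ)) ^ ((1:ℂ) - c - 1) = (((1-x) ^ (-c) : ℝ) : ℂ) := by
      rw [show ((1:ℂ) - (x:ℝ)) = (((1 - x : ℝ)) : ℂ) by push_cast; ring,
        Complex.ofReal_cpow (by linarith : (0:ℝ) ≤ 1 - x)]
      push_cast
      ring_nf
    rw [e1, e2]
    push_cast
    ring
  have := hint.symm.trans hbeta
  rw [show ((π:ℝ):ℂ) * (c:ℂ) = ((π * c : ℝ) : ℂ) by push_cast; ring, ← Complex.ofReal_sin,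
    ← Complex.ofReal_div] at this
  exact_mod_cast this

lemma JA_eq {c : ℝ} (hc : c ∈ Ioo (0:ℝ) 1) : JA c = π / Real.sin (π * c) := by
  obtain ⟨hc0, hc1⟩ := hc
  -- substitution t = u / (1-u)
  have himg : (fun u : ℝ => u / (1-u)) '' (Ioo 0 1) = Ioi (0:ℝ) := by
    ext t
    constructor
    · rintro ⟨u, ⟨hu0, hu1⟩, rfl⟩
      have : 0 < 1 - u := by linarith
      exact mem_Ioi.2 (by positivity)
    · intro ht
      have ht0 : (0:ℝ) < t := ht
      refine ⟨t / (1+t), ⟨by positivity, ?_⟩, ?_⟩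
      · rw [div_lt_one (by linarith)]; linarith
      · dsimp only
        have h1 : (1:ℝ) - t/(1+t) = 1/(1+t) := by field_simp; ring
        rw [h1]
        field_simp
  have hderiv : ∀ u ∈ Ioo (0:ℝ) 1, HasDerivWithinAt (fun u : ℝ => u / (1-u))
      (((1-u)^2)⁻¹) (Ioo 0 1) u := by
    intro u hu
    have h1u : (1:ℝ) - u ≠ 0 := fun hh => absurd (sub_eq_zero.1 hh).symm (ne_of_lt hu.2)
    have h2 := (hasDerivAt_id u).div ((hasDerivAt_id u).const_sub 1) h1u
    simp only [id, Pi.div_def] at h2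
    exact (h2.congr_deriv (by ring)).hasDerivWithinAt
  have hinj : InjOn (fun u : ℝ => u / (1-u)) (Ioo 0 1) := by
    intro u hu v hv h
    have h1u : (1:ℝ) - u ≠ 0 := fun hh => absurd (sub_eq_zero.1 hh).symm (ne_of_lt hu.2)
    have h1v : (1:ℝ) - v ≠ 0 := fun hh => absurd (sub_eq_zero.1 hh).symm (ne_of_lt hv.2)
    field_simp at h
    nlinarith [h]
  have hsub := integral_image_eq_integral_abs_deriv_smul measurableSet_Ioo hderiv hinj (ja c)
  rw [himg] at hsub
  rw [JA, hsub]
  have hcongr : ∀ u ∈ Ioo (0:ℝ) 1,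
      |((1-u)^2)⁻¹| • ja c (u / (1-u)) = u ^ (c-1) * (1-u) ^ (-c) := by
    intro u hu
    obtain ⟨hu0, hu1⟩ := hu
    have hw0 : (0:ℝ) < 1 - u := by linarith
    have hwne : (1:ℝ) - u ≠ 0 := hw0.ne'
    have hP : (0:ℝ) < u ^ (c-1) := Real.rpow_pos_of_pos hu0 _
    have hQ : (0:ℝ) < (1-u) ^ (c-1) := Real.rpow_pos_of_pos hw0 _
    have hdiv : (u / (1-u)) ^ (c-1) = u ^ (c-1) / (1-u) ^ (c-1) :=
      Real.div_rpow hu0.le hw0.le _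
    have hden : 1 + u / (1-u) = 1 / (1-u) := by field_simp; ring
    have hwc : (1-u) ^ (-c:ℝ) = ((1-u) ^ (c-1))⁻¹ * (1-u)⁻¹ := by
      rw [show (-c:ℝ) = (-(c-1)) + (-1) by ring, Real.rpow_add hw0,
        Real.rpow_neg hw0.le, Real.rpow_neg_one]
    rw [smul_eq_mul, ja, hdiv, hden, hwc, abs_of_pos (by positivity)]
    field_simp
  rw [setIntegral_congr_fun measurableSet_Ioo hcongr]
  -- now relate to interval integral
  rw [← integral_Ioc_eq_integral_Ioo, ← intervalIntegral.integral_of_le (by norm_num : (0:ℝ) ≤ 1)]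
  exact JA_beta ⟨hc0, hc1⟩

lemma J1_doubling {c d : ℝ} (hc : c ∈ Ioo (0:ℝ) (1/2)) (hd : d ∈ Ioo (0:ℝ) (1/2)) :
    J1 c d = J1 (2*c) (2*d) - (JA (2*c) - JA (2*d)) := by
  have hc' : 2*c ∈ Ioo (0:ℝ) 1 := ⟨by linarith [hc.1], by linarith [hc.2]⟩
  have hd' : 2*d ∈ Ioo (0:ℝ) 1 := ⟨by linarith [hd.1], by linarith [hd.2]⟩
  have hsub := integral_comp_rpow_Ioi_of_pos (g := j1 c d) (p := 2) (by norm_num)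
  rw [J1, ← hsub]
  have hpt : ∀ x ∈ Ioi (0:ℝ), ((2:ℝ) * x ^ ((2:ℝ) - 1)) • j1 c d (x ^ (2:ℝ))
      = j1 (2*c) (2*d) x - (ja (2*c) x - ja (2*d) x) := by
    intro x hx
    have hx0 : (0:ℝ) < x := hx
    have hxx : x ^ ((2:ℝ)) = x * x := by
      rw [show (2:ℝ) = 1 + 1 by norm_num, Real.rpow_add hx0, Real.rpow_one]
    have hx1r : x ^ ((2:ℝ) - 1) = x := by norm_num
    have hA : (x ^ (2:ℝ)) ^ (c-1) = x ^ (2*c-1) * x⁻¹ := by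
      rw [← Real.rpow_mul hx0.le, show (2:ℝ) * (c-1) = (2*c-1) + (-1) by ring,
        Real.rpow_add hx0, Real.rpow_neg_one]
    have hB : (x ^ (2:ℝ)) ^ (d-1) = x ^ (2*d-1) * x⁻¹ := by
      rw [← Real.rpow_mul hx0.le, show (2:ℝ) * (d-1) = (2*d-1) + (-1) by ring,
        Real.rpow_add hx0, Real.rpow_neg_one]
    have hC : (2:ℝ)*c - 1 = 2*c - 1 := by ring
    rw [smul_eq_mul, j1, j1, ja, ja, hA, hB, hxx, hx1r]
    rcases eq_or_ne x 1 with rfl | hx1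
    · norm_num
    · have h1 : x - 1 ≠ 0 := sub_ne_zero.2 hx1
      have h2 : 1 + x ≠ 0 := by positivity
      have h3 : x * x - 1 ≠ 0 := by
        intro h
        have : (x-1)*(x+1) = 0 := by ring_nf; linarith [h]
        rcases mul_eq_zero.1 this with h' | h'
        · exact h1 h'
        · nlinarith
      have h3' : x^2 - 1 ≠ 0 := by rw [sq]; exact h3
      generalize x ^ (2*c-1) = A
      generalize x ^ (2*d-1) = B
      field_simp
      ring
  rw [setIntegral_congr_fun measurableSet_Ioi hpt]
  have e2 : Integrable (fun x => ja (2*c) x - ja (2*d) x) (volume.restrict (Ioi (0:ℝ))) :=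
    (intJA hc').sub (intJA hd')
  rw [integral_sub (intJ1 hc' hd') e2, integral_sub (intJA hc') (intJA hd')]
  rfl

lemma integral_Ioo_rpow {σ : ℝ} (hσ : 0 < σ) : (∫ t in Ioo (0:ℝ) 1, t ^ (σ - 1)) = 1/σ := by
  rw [← integral_Ioc_eq_integral_Ioo, ← intervalIntegral.integral_of_le (by norm_num : (0:ℝ) ≤ 1),
    integral_rpow (Or.inl (by linarith))]
  rw [show σ - 1 + 1 = σ by ring, Real.one_rpow, Real.zero_rpow hσ.ne']
  norm_num

lemma indicator_int {σ : ℝ} (hσ : 0 < σ) :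
    Integrable ((Ioo (0:ℝ) 1).indicator (fun t => t ^ (σ-1))) (volume.restrict (Ioi (0:ℝ))) := by
  apply Integrable.restrict
  exact IntegrableOn.integrable_indicator
    ((intervalIntegral.integrableOn_Ioo_rpow_iff one_pos).2 (by linarith)) measurableSet_Ioo

noncomputable def gfun (σ : ℝ) : ℝ → ℝ :=
  fun t => j1 (1/2) σ t - (Ioo (0:ℝ) 1).indicator (fun u => u ^ (σ-1)) t

lemma B_eq {σ : ℝ} (hσ : σ ∈ Ioo (0:ℝ) 1) :
    (∫ t in Ioi (0:ℝ), gfun σ t) = J1 (1/2) σ - 1/σ := by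
  unfold gfun
  rw [integral_sub (intJ1 (by norm_num) hσ) (indicator_int hσ.1), integral_indicator
    measurableSet_Ioo, Measure.restrict_restrict measurableSet_Ioo,
    inter_eq_self_of_subset_left Ioo_subset_Ioi_self, integral_Ioo_rpow hσ.1]
  rfl

lemma gfun_meas (σ : ℝ) : Measurable (gfun σ) := by
  apply Measurable.sub (j1_meas _ _)
  exact Measurable.indicator (by measurability) measurableSet_Ioo

lemma gfun_small {σ t : ℝ} (hσ0 : 0 < σ) (hσ : σ ≤ 1/4) (ht : t ∈ Ioo (0:ℝ) 1) :
    |gfun σ t| ≤ t ^ (-(1/2) : ℝ) := by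
  obtain ⟨ht0, ht1⟩ := ht
  have htne : t - 1 ≠ 0 := sub_ne_zero.2 (ne_of_lt ht1)
  have hb : t ^ (σ-1) * t = t ^ σ := by
    nth_rewrite 2 [show σ = (σ-1)+1 by ring]
    rw [Real.rpow_add ht0, Real.rpow_one]
  have hcomb : gfun σ t = (t ^ (-(1/2):ℝ) - t ^ σ)/(t-1) := by
    have hmem : t ∈ Ioo (0:ℝ) 1 := ⟨ht0, ht1⟩
    rw [gfun, j1, indicator_of_mem hmem,
      show (1:ℝ)/2 - 1 = -(1/2) by norm_num]
    field_simp
    linear_combination -hb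
  have hA1 : (1:ℝ) ≤ t ^ (-(1/2):ℝ) :=
    Real.one_le_rpow_of_pos_of_le_one_of_nonpos ht0 ht1.le (by norm_num)
  have hB1 : t ^ σ ≤ 1 := Real.rpow_le_one ht0.le ht1.le hσ0.le
  have hB2 : t ^ ((1:ℝ)/2) ≤ t ^ σ :=
    Real.rpow_le_rpow_of_exponent_ge ht0 ht1.le (by linarith)
  have hAt : t ^ (-(1/2):ℝ) * t = t ^ ((1:ℝ)/2) := by
    nth_rewrite 2 [show (1:ℝ)/2 = (-(1/2))+1 by norm_num]
    rw [Real.rpow_add ht0, Real.rpow_one]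
  rw [hcomb, abs_div, abs_of_nonneg (by linarith), abs_of_neg (by linarith : t - 1 < 0)]
  rw [div_le_iff₀ (by linarith : (0:ℝ) < -(t-1))]
  nlinarith [Real.rpow_pos_of_pos ht0 (-(1/2):ℝ)]

lemma gfun_mid {σ t : ℝ} (hσ0 : 0 < σ) (hσ : σ ≤ 1/4) (ht1 : 1 < t) (ht2 : t ≤ 2) :
    |gfun σ t| ≤ 2 := by
  have ht0 : (0:ℝ) < t := by linarith
  have hne : t - 1 > 0 := by linarith
  have hnotin : t ∉ Ioo (0:ℝ) 1 := fun h => absurd h.2 (not_lt.2 ht1.le)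
  have hmax : max (t ^ ((1:ℝ)/2 - 1)) (t ^ (σ - 1)) ≤ 1 := by
    apply max_le <;> exact Real.rpow_le_one_of_one_le_of_nonpos ht1.le (by linarith)
  have hnum := abs_rpow_sub_rpow_le (c := 1/2) (d := σ) ht0 (by linarith)
  have hlog : |Real.log t| ≤ t - 1 := by
    rw [abs_of_nonneg (Real.log_nonneg ht1.le)]
    linarith [Real.log_le_sub_one_of_pos ht0]
  have hkey : |t ^ ((1:ℝ)/2 - 1) - t ^ (σ-1)| ≤ t - 1 := by
    have h2 : (0:ℝ) ≤ max (t ^ ((1:ℝ)/2 - 1)) (t ^ (σ - 1)) :=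
      le_max_of_le_left (Real.rpow_pos_of_pos ht0 _).le
    have h3 : ((1:ℝ)/2 - σ) * |Real.log t| * max (t ^ ((1:ℝ)/2-1)) (t ^ (σ-1)) ≤
        1 * (t-1) * 1 := by
      apply mul_le_mul _ hmax h2 (by positivity)
      apply mul_le_mul (by linarith) hlog (abs_nonneg _) (by norm_num)
    calc |t ^ ((1:ℝ)/2 - 1) - t ^ (σ-1)| ≤ _ := hnum
      _ ≤ 1 * (t-1) * 1 := h3
      _ = t - 1 := by ring
  rw [gfun, indicator_of_notMem hnotin, sub_zero, j1, abs_div, abs_of_pos hne]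
  rw [div_le_iff₀ hne]
  nlinarith

lemma gfun_big {σ t : ℝ} (hσ0 : 0 < σ) (hσ : σ ≤ 1/4) (ht : 2 < t) :
    |gfun σ t| ≤ 4 * t ^ (-(3/2) : ℝ) := by
  have ht0 : (0:ℝ) < t := by linarith
  have ht1 : (1:ℝ) ≤ t := by linarith
  have hnotin : t ∉ Ioo (0:ℝ) 1 := fun h => absurd h.2 (by linarith [h.2])
  have h1 : t ^ ((1:ℝ)/2 - 1) = t ^ (-(1/2):ℝ) := by norm_num
  have h2 : t ^ (σ - 1) ≤ t ^ (-(1/2):ℝ) :=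
    Real.rpow_le_rpow_of_exponent_le ht1 (by linarith)
  have hA : (0:ℝ) < t ^ (-(1/2):ℝ) := Real.rpow_pos_of_pos ht0 _
  have hB : (0:ℝ) < t ^ (σ-1) := Real.rpow_pos_of_pos ht0 _
  have hnum : |t ^ ((1:ℝ)/2 - 1) - t ^ (σ-1)| ≤ 2 * t ^ (-(1/2):ℝ) := by
    rw [h1, abs_le]; constructor <;> nlinarith
  have hden : t/2 ≤ |t-1| := by rw [abs_of_pos (by linarith)]; linarith
  have hrw : 4 * t ^ (-(3/2):ℝ) = (2 * t ^ (-(1/2):ℝ)) / (t/2) := by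
    have h7 : t ^ (-(3/2):ℝ) = t ^ (-(1/2):ℝ) / t := by
      rw [show (-(3/2):ℝ) = -(1/2) - 1 by norm_num, Real.rpow_sub ht0 (-(1/2)) 1,
        Real.rpow_one]
    rw [h7]; field_simp; ring
  rw [gfun, indicator_of_notMem hnotin, sub_zero, j1, abs_div, hrw]
  exact div_le_div₀ (by positivity) hnum (by linarith) hden

lemma gfun_le_bnd {σ t : ℝ} (hσ0 : 0 < σ) (hσ : σ ≤ 1/4) (ht : 0 < t) (htne : t ≠ 1) :
    |gfun σ t| ≤ bnd (-(1/2)) (-(3/2)) 1 2 4 t := by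
  apply le_bnd (by norm_num) (by norm_num) (by norm_num) _ _ _ ht htne
  · intro u hu0 hu2
    rw [one_mul]
    exact gfun_small hσ0 hσ ⟨hu0, by linarith⟩
  · intro u hu1 hu2 hune
    rcases lt_or_ge u 1 with h | h
    · have := gfun_small hσ0 hσ ⟨by linarith, h⟩
      have h2 : u ^ (-(1/2):ℝ) ≤ 2 := rpow_le_two_of hu1 (by norm_num) (by norm_num)
      linarith
    · exact gfun_mid hσ0 hσ (lt_of_le_of_ne h (Ne.symm hune)) hu2
  · intro u hu
    have := gfun_big hσ0 hσ hu
    linarith [this]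

lemma gfun_cont {t : ℝ} (ht0 : 0 < t) : Continuous (fun σ : ℝ => gfun σ t) := by
  have hgc : Continuous (fun σ : ℝ => t ^ (σ - 1)) := by
    have heq : (fun σ : ℝ => t ^ (σ-1)) = fun σ => Real.exp ((σ-1) * Real.log t) := by
      funext σ; rw [Real.rpow_def_of_pos ht0, mul_comm]
    rw [heq]
    exact Real.continuous_exp.comp ((continuous_id.sub continuous_const).mul continuous_const)
  rcases em (t ∈ Ioo (0:ℝ) 1) with h | h
  · simp only [gfun, j1, indicator_of_mem h]
    exact ((continuous_const.sub hgc).div_const _).sub hgc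
  · simp only [gfun, j1, indicator_of_notMem h, sub_zero]
    exact (continuous_const.sub hgc).div_const _

lemma B_tendsto : Tendsto (fun σ => ∫ t in Ioi (0:ℝ), gfun σ t) (𝓝[>] (0:ℝ))
    (𝓝 (∫ t in Ioi (0:ℝ), gfun 0 t)) := by
  apply tendsto_integral_filter_of_dominated_convergence (bnd (-(1/2)) (-(3/2)) 1 2 4)
  · exact Eventually.of_forall (fun σ => (gfun_meas σ).aestronglyMeasurable)
  · have hmem : Ioc (0:ℝ) (1/4) ∈ 𝓝[>] (0:ℝ) := Ioc_mem_nhdsGT_of_mem (by norm_num)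
    filter_upwards [hmem] with σ hσ
    filter_upwards [ae_ne_one, ae_restrict_mem measurableSet_Ioi] with t htne ht
    exact gfun_le_bnd hσ.1 hσ.2 ht htne
  · exact (bnd_integrable (by norm_num) (by norm_num) 1 2 4).restrict
  · filter_upwards [ae_restrict_mem measurableSet_Ioi] with t ht
    exact (((gfun_cont ht).tendsto 0).mono_left nhdsWithin_le_nhds)

lemma rlim : Tendsto (fun σ : ℝ => 1/σ - π * (Real.cos (π*σ)/Real.sin (π*σ)))
    (𝓝[>] (0:ℝ)) (𝓝 0) := by
  have hbound : ∀ σ ∈ Ioc (0:ℝ) (1/4),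
      ‖1/σ - π * (Real.cos (π*σ)/Real.sin (π*σ))‖ ≤ 7 * σ := by
    intro σ hσ
    obtain ⟨hσ0, hσ4⟩ := hσ
    have hπ3 : (3:ℝ) < π := Real.pi_gt_three
    have hπ4 : π < 3.15 := Real.pi_lt_d2
    set x := π * σ with hxdef
    have hx0 : 0 < x := by positivity
    have hx1 : x ≤ 1 := by nlinarith
    have hsin_ub : Real.sin x ≤ x := (Real.sin_lt hx0).le
    have hsin_lb : x - x^3/4 < Real.sin x := by
      linarith [Real.sin_gt_sub_cube hx0, pow_pos hx0 3]
    have hcos_ub : Real.cos x ≤ 1 := Real.cos_le_one x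
    have hcos_lb : 1 - x^2/2 ≤ Real.cos x := Real.one_sub_sq_div_two_le_cos
    have hsin_pos : 0 < Real.sin x := by nlinarith
    have hden_pos : 0 < σ * Real.sin x := by positivity
    have hr : 1/σ - π * (Real.cos x / Real.sin x)
        = (Real.sin x - x * Real.cos x) / (σ * Real.sin x) := by
      have hsx : Real.sin (π*σ) ≠ 0 := hsin_pos.ne'
      have hsx' : Real.sin (σ*π) ≠ 0 := by rw [mul_comm]; exact hsx
      rw [hxdef]; field_simp
    rw [Real.norm_eq_abs, hr, abs_div, abs_of_pos hden_pos, div_le_iff₀ hden_pos]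
    have hnum_ub : Real.sin x - x * Real.cos x ≤ x^3/2 := by nlinarith
    have hnum_lb : -(x^3/2) ≤ Real.sin x - x * Real.cos x := by nlinarith
    have habs : |Real.sin x - x * Real.cos x| ≤ x^3/2 := abs_le.2 ⟨hnum_lb, hnum_ub⟩
    have hx3 : x^3 ≤ x := by nlinarith
    have hsin_lb2 : (3/4)*x ≤ Real.sin x := by nlinarith
    have hπ2 : π^2 ≤ 10 := by nlinarith
    have h1 : x^3/2 = (π^2/2) * σ^2 * x := by rw [hxdef]; ring
    have h2 : 7*σ*(σ*((3/4)*x)) ≤ 7*σ*(σ * Real.sin x) := by nlinarith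
    have h3 : (π^2/2) * σ^2 * x ≤ 7*σ*(σ*((3/4)*x)) := by nlinarith [mul_pos (mul_pos hσ0 hσ0) hx0]
    linarith
  have h7 : Tendsto (fun σ : ℝ => 7 * σ) (𝓝[>] (0:ℝ)) (𝓝 0) := by
    have hc : Continuous (fun σ : ℝ => 7 * σ) := continuous_const.mul continuous_id
    have := hc.tendsto (0:ℝ)
    rw [mul_zero] at this
    exact this.mono_left nhdsWithin_le_nhds
  apply squeeze_zero_norm' _ h7
  filter_upwards [Ioc_mem_nhdsGT_of_mem (by norm_num : (0:ℝ) ∈ Ico (0:ℝ) (1/4))] with σ hσ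
  exact hbound σ hσ

noncomputable def phi (σ : ℝ) : ℝ := J1 (1/2) σ - π * (Real.cos (π*σ) / Real.sin (π*σ))

lemma phi_tendsto : Tendsto phi (𝓝[>] (0:ℝ)) (𝓝 (∫ t in Ioi (0:ℝ), gfun 0 t)) := by
  have h := B_tendsto.add rlim
  rw [add_zero] at h
  apply h.congr'
  filter_upwards [Ioo_mem_nhdsGT_of_mem (by norm_num : (0:ℝ) ∈ Ico (0:ℝ) 1)] with σ hσ
  rw [B_eq hσ, phi]
  ring

lemma cot_double {θ : ℝ} (hs : Real.sin θ ≠ 0) (hc : Real.cos θ ≠ 0) :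
    Real.cos θ / Real.sin θ = Real.cos (2*θ)/Real.sin (2*θ) + 1/Real.sin (2*θ) := by
  rw [Real.sin_two_mul, Real.cos_two_mul]
  field_simp
  ring

lemma phi_pair {σ τ : ℝ} (hσ : σ ∈ Ioo (0:ℝ) (1/2)) (hτ : τ ∈ Ioo (0:ℝ) (1/2)) :
    phi σ - phi (2*σ) = phi τ - phi (2*τ) := by
  have hhalf : (1:ℝ)/2 ∈ Ioo (0:ℝ) 1 := ⟨by norm_num, by norm_num⟩
  have hσ1 : σ ∈ Ioo (0:ℝ) 1 := ⟨hσ.1, by linarith [hσ.2]⟩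
  have hτ1 : τ ∈ Ioo (0:ℝ) 1 := ⟨hτ.1, by linarith [hτ.2]⟩
  have h2σ : 2*σ ∈ Ioo (0:ℝ) 1 := ⟨by linarith [hσ.1], by linarith [hσ.2]⟩
  have h2τ : 2*τ ∈ Ioo (0:ℝ) 1 := ⟨by linarith [hτ.1], by linarith [hτ.2]⟩
  have e1 := J1_doubling hσ hτ
  have e2 : J1 σ τ = - J1 (1/2) σ + J1 (1/2) τ := by
    rw [J1_cocycle hσ1 hhalf hτ1, J1_antisymm σ (1/2)]
  have e3 : J1 (2*σ) (2*τ) = - J1 (1/2) (2*σ) + J1 (1/2) (2*τ) := by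
    rw [J1_cocycle h2σ hhalf h2τ, J1_antisymm (2*σ) (1/2)]
  have e4σ : JA (2*σ) = π / Real.sin (π * (2*σ)) := JA_eq h2σ
  have e4τ : JA (2*τ) = π / Real.sin (π * (2*τ)) := JA_eq h2τ
  have hcot : ∀ x : ℝ, x ∈ Ioo (0:ℝ) (1/2) →
      π * (Real.cos (π*x)/Real.sin (π*x))
        = π * (Real.cos (π*(2*x))/Real.sin (π*(2*x))) + π / Real.sin (π*(2*x)) := by
    intro x hx
    have hs : Real.sin (π*x) ≠ 0 := by
      apply ne_of_gt
      apply Real.sin_pos_of_pos_of_lt_pi (mul_pos Real.pi_pos hx.1)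
      nlinarith [Real.pi_pos, hx.1, hx.2]
    have hcos : Real.cos (π*x) ≠ 0 := by
      apply ne_of_gt
      apply Real.cos_pos_of_mem_Ioo
      constructor
      · nlinarith [Real.pi_pos, hx.1]
      · nlinarith [Real.pi_pos, hx.2]
    have e5 := cot_double hs hcos
    rw [show (2:ℝ)*(π*x) = π*(2*x) by ring] at e5
    rw [e5]
    ring
  have e6σ := hcot σ hσ
  have e6τ := hcot τ hτ
  unfold phi
  linarith

lemma phi_eq_B0 {σ : ℝ} (hσ : σ ∈ Ioo (0:ℝ) 1) :
    phi σ = ∫ t in Ioi (0:ℝ), gfun 0 t := by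
  -- first: the doubling constant is zero
  have hgeo : Tendsto (fun k : ℕ => ((1:ℝ)/2)^k) atTop (𝓝 0) :=
    tendsto_pow_atTop_nhds_zero_of_lt_one (by norm_num) (by norm_num)
  have hconst : ∀ x ∈ Ioo (0:ℝ) (1/2), phi x = phi (2*x) := by
    intro x hx
    set u : ℕ → ℝ := fun k => (1/8) * (1/2)^k with hu_def
    have humem : ∀ k, u k ∈ Ioo (0:ℝ) (1/2) := by
      intro k
      have h1 : (0:ℝ) < (1/2)^k := by positivity
      have h2 : ((1:ℝ)/2)^k ≤ 1 := pow_le_one₀ (by norm_num) (by norm_num)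
      constructor
      · simp only [hu_def]; positivity
      · simp only [hu_def]; nlinarith
    have hu0 : Tendsto u atTop (𝓝[>] (0:ℝ)) := by
      apply tendsto_nhdsWithin_of_tendsto_nhds_of_eventually_within
      · have := hgeo.const_mul (1/8 : ℝ)
        rw [mul_zero] at this
        exact this
      · exact Eventually.of_forall (fun k => (humem k).1)
    have h2u0 : Tendsto (fun k => 2 * u k) atTop (𝓝[>] (0:ℝ)) := by
      apply tendsto_nhdsWithin_of_tendsto_nhds_of_eventually_within
      · have := (hgeo.const_mul (1/8 : ℝ)).const_mul (2:ℝ)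
        simp only [mul_zero] at this
        exact this
      · refine Eventually.of_forall (fun k => ?_)
        have := (humem k).1
        exact mem_Ioi.2 (by linarith)
    have hs1 : Tendsto (fun k => phi (u k)) atTop (𝓝 (∫ t in Ioi (0:ℝ), gfun 0 t)) :=
      phi_tendsto.comp hu0
    have hs2 : Tendsto (fun k => phi (2 * u k)) atTop (𝓝 (∫ t in Ioi (0:ℝ), gfun 0 t)) :=
      phi_tendsto.comp h2u0
    have hsub := hs1.sub hs2
    rw [sub_self] at hsub
    have hfun : (fun k => phi (u k) - phi (2 * u k)) = fun _ => phi x - phi (2*x) := by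
      funext k
      exact phi_pair (humem k) hx
    rw [hfun] at hsub
    have := tendsto_nhds_unique hsub tendsto_const_nhds
    linarith
  -- now iterate halving
  set v : ℕ → ℝ := fun k => σ * (1/2)^k with hv_def
  have hvmem : ∀ k, v k ∈ Ioo (0:ℝ) 1 := by
    intro k
    have h1 : (0:ℝ) < (1/2)^k := by positivity
    have h2 : ((1:ℝ)/2)^k ≤ 1 := pow_le_one₀ (by norm_num) (by norm_num)
    constructor
    · simp only [hv_def]; exact mul_pos hσ.1 h1
    · simp only [hv_def]; nlinarith [hσ.1, hσ.2]
  have hind : ∀ k, phi (v k) = phi σ := by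
    intro k
    induction k with
    | zero => simp [hv_def]
    | succ k ih =>
      have hmem : v (k+1) ∈ Ioo (0:ℝ) (1/2) := by
        have h1 : (0:ℝ) < (1/2)^(k+1) := by positivity
        have h2 : ((1:ℝ)/2)^(k+1) ≤ 1/2 := by
          rw [pow_succ]
          have h3 : ((1:ℝ)/2)^k ≤ 1 := pow_le_one₀ (by norm_num) (by norm_num)
          nlinarith
        constructor
        · simp only [hv_def]; exact mul_pos hσ.1 h1
        · simp only [hv_def]; nlinarith [hσ.1, hσ.2]
      have h2v : 2 * v (k+1) = v k := by
        simp only [hv_def]; rw [pow_succ]; ring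
      rw [← ih, ← h2v]
      exact hconst _ hmem
  have hv0 : Tendsto v atTop (𝓝[>] (0:ℝ)) := by
    apply tendsto_nhdsWithin_of_tendsto_nhds_of_eventually_within
    · have := hgeo.const_mul σ
      rw [mul_zero] at this
      exact this
    · exact Eventually.of_forall (fun k => (hvmem k).1)
  have hs : Tendsto (fun k => phi (v k)) atTop (𝓝 (∫ t in Ioi (0:ℝ), gfun 0 t)) :=
    phi_tendsto.comp hv0
  have hfun : (fun k => phi (v k)) = fun _ => phi σ := funext hind
  rw [hfun] at hs
  exact tendsto_nhds_unique tendsto_const_nhds hs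

lemma J1_half {σ : ℝ} (hσ : σ ∈ Ioo (0:ℝ) 1) :
    J1 (1/2) σ = π * (Real.cos (π*σ) / Real.sin (π*σ)) := by
  have hhalf : (1:ℝ)/2 ∈ Ioo (0:ℝ) 1 := ⟨by norm_num, by norm_num⟩
  have h1 : phi (1/2) = 0 := by
    rw [phi, J1_self, show π*((1:ℝ)/2) = π/2 by ring, Real.cos_pi_div_two]
    simp
  have h2 := phi_eq_B0 hσ
  have h3 := phi_eq_B0 hhalf
  rw [h1] at h3
  rw [← h3] at h2
  rw [phi] at h2
  linarith

lemma J1_eq {c d : ℝ} (hc : c ∈ Ioo (0:ℝ) 1) (hd : d ∈ Ioo (0:ℝ) 1) :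
    J1 c d = π * (Real.cos (π*d)/Real.sin (π*d)) - π * (Real.cos (π*c)/Real.sin (π*c)) := by
  have hhalf : (1:ℝ)/2 ∈ Ioo (0:ℝ) 1 := ⟨by norm_num, by norm_num⟩
  rw [J1_cocycle hc hhalf hd, J1_antisymm c (1/2), J1_half hc, J1_half hd]
  ring

lemma J2_eq {σ : ℝ} (hσ : σ ∈ Ioo (0:ℝ) 1) : J2 σ = π^2 / (Real.sin (π*σ))^2 := by
  obtain ⟨hσ0, hσ1⟩ := hσ
  have hhalf : (1:ℝ)/2 ∈ Ioo (0:ℝ) 1 := ⟨by norm_num, by norm_num⟩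
  set a := σ/2 with ha_def
  set b := (σ+1)/2 with hb_def
  have ha : a ∈ Ioo (0:ℝ) 1 := ⟨by simp only [ha_def]; linarith, by simp only [ha_def]; linarith⟩
  have hb : b ∈ Ioo (0:ℝ) 1 := ⟨by simp only [hb_def]; linarith, by simp only [hb_def]; linarith⟩
  set ε := min (σ/2) ((1-σ)/2) with hε_def
  have hε : 0 < ε := lt_min (by linarith) (by linarith)
  have hball : ∀ x ∈ Metric.ball σ ε, a < x ∧ x < b := by
    intro x hx
    rw [Metric.mem_ball, Real.dist_eq, abs_lt] at hx
    constructor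
    · have := min_le_left (σ/2) ((1-σ)/2); simp only [ha_def]; linarith [hx.1]
    · have := min_le_right (σ/2) ((1-σ)/2); simp only [hb_def]; linarith [hx.2]
  have key := hasDerivAt_integral_of_dominated_loc_of_deriv_le (μ := volume.restrict (Ioi (0:ℝ)))
    (F := fun x t => j1 x (1/2) t) (F' := fun x t => j2 x t) (x₀ := σ)
    (bound := fun t => |j2 a t| + |j2 b t|) (Metric.ball_mem_nhds σ hε)
    (Eventually.of_forall (fun x => (j1_meas x (1/2)).aestronglyMeasurable))
    (intJ1 ⟨hσ0, hσ1⟩ hhalf) ((j2_meas σ).aestronglyMeasurable) ?_ ?_ ?_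
  · -- conclude
    have hderiv1 : HasDerivAt (fun x => J1 x (1/2)) (J2 σ) σ := key.2
    -- the explicit function
    set G : ℝ → ℝ := fun x => π * (Real.cos (π*(1/2))/Real.sin (π*(1/2)))
      - π * (Real.cos (π*x)/Real.sin (π*x)) with hG_def
    have hs : Real.sin (π*σ) ≠ 0 := by
      apply ne_of_gt
      apply Real.sin_pos_of_pos_of_lt_pi (mul_pos Real.pi_pos hσ0)
      nlinarith [Real.pi_pos]
    have hGderiv : HasDerivAt G (π^2 / (Real.sin (π*σ))^2) σ := by
      have hc1 : HasDerivAt (fun x : ℝ => π*x) π σ := by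
        simpa using (hasDerivAt_id σ).const_mul π
      have hcos : HasDerivAt (fun x : ℝ => Real.cos (π*x)) (-Real.sin (π*σ) * π) σ := hc1.cos
      have hsin : HasDerivAt (fun x : ℝ => Real.sin (π*x)) (Real.cos (π*σ) * π) σ := hc1.sin
      have hdiv := hcos.div hsin hs
      have hfinal := (hdiv.const_mul π).const_sub (π * (Real.cos (π*(1/2))/Real.sin (π*(1/2))))
      refine hfinal.congr_deriv ?_
      have hpyth := Real.sin_sq_add_cos_sq (π*σ)
      field_simp
      nlinarith [hpyth]
    have heq : (fun x => J1 x (1/2)) =ᶠ[𝓝 σ] G := by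
      filter_upwards [isOpen_Ioo.mem_nhds (⟨hσ0, hσ1⟩ : σ ∈ Ioo (0:ℝ) 1)] with x hx
      rw [J1_eq hx hhalf, hG_def]
    have hderiv2 : HasDerivAt (fun x => J1 x (1/2)) (π^2 / (Real.sin (π*σ))^2) σ :=
      hGderiv.congr_of_eventuallyEq heq
    exact hderiv1.unique hderiv2
  · -- bound
    filter_upwards [ae_restrict_mem measurableSet_Ioi] with t ht
    intro x hx
    obtain ⟨hax, hxb⟩ := hball x hx
    have ht0 : (0:ℝ) < t := ht
    have habs : ∀ y : ℝ, |j2 y t| = t ^ (y-1) * |Real.log t / (t-1)| := by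
      intro y
      rw [j2, mul_div_assoc, abs_mul, abs_of_nonneg (Real.rpow_nonneg ht0.le _)]
    rw [Real.norm_eq_abs, habs]
    have hnn : (0:ℝ) ≤ |Real.log t / (t-1)| := abs_nonneg _
    rcases le_or_gt t 1 with h1 | h1
    · have h2 : t ^ (x-1) ≤ t ^ (a-1) :=
        Real.rpow_le_rpow_of_exponent_ge ht0 h1 (by linarith)
      have h3 : (0:ℝ) ≤ |j2 b t| := abs_nonneg _
      rw [habs a] at *
      nlinarith [mul_le_mul_of_nonneg_right h2 hnn]
    · have h2 : t ^ (x-1) ≤ t ^ (b-1) :=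
        Real.rpow_le_rpow_of_exponent_le h1.le (by linarith)
      have h3 : (0:ℝ) ≤ |j2 a t| := abs_nonneg _
      rw [habs b] at *
      nlinarith [mul_le_mul_of_nonneg_right h2 hnn]
  · -- bound integrable
    exact ((intJ2 ha).abs.add (intJ2 hb).abs)
  · -- differentiability
    filter_upwards [ae_restrict_mem measurableSet_Ioi] with t ht
    intro x hx
    have ht0 : (0:ℝ) < t := ht
    rcases eq_or_ne t 1 with rfl | htne
    · have hfun : (fun x => j1 x (1/2) (1:ℝ)) = fun _ => (0:ℝ) := by
        funext y; rw [j1]; simp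
      have hval : j2 x (1:ℝ) = 0 := by rw [j2]; simp
      rw [hfun, hval]
      exact hasDerivAt_const x 0
    · have hd0 : HasDerivAt (fun y : ℝ => t ^ (y-1)) (t ^ (x-1) * Real.log t) x := by
        have h1 : (fun y : ℝ => t ^ (y-1)) = fun y => Real.exp ((y-1) * Real.log t) := by
          funext y; rw [Real.rpow_def_of_pos ht0, mul_comm]
        rw [h1, Real.rpow_def_of_pos ht0, mul_comm (Real.log t)]
        have h2 : HasDerivAt (fun y : ℝ => (y-1) * Real.log t) (Real.log t) x := by
          simpa using ((hasDerivAt_id x).sub_const 1).mul_const (Real.log t)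
        simpa using h2.exp
      have hd1 := (hd0.sub_const (t ^ ((1:ℝ)/2 - 1))).div_const (t-1)
      have hfun : (fun y => j1 y (1/2) t) = fun y => (t ^ (y-1) - t ^ ((1:ℝ)/2-1))/(t-1) := by
        funext y; rw [j1]
      have hval : j2 x t = t ^ (x-1) * Real.log t / (t-1) := by rw [j2]
      rw [hfun, hval]
      exact hd1

end AScaling

open AScaling in
theorem a_scaling_identity (a m n l : ℝ) (ha : 0 < a) (hl : 0 < l)
    (hm1 : -1/2 < m) (hm2 : m < l - 1/2) (hn1 : -1/2 < n) (hn2 : n < l - 1/2) :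
    ∫ x in Ioi (0:ℝ), (x ^ (2*n) - x ^ (2*m)) * Real.log (a * x^2) / (x ^ (2*l) - 1)
      = Real.log a * (π / (2*l)) *
          (Real.cos ((2*m+1)*π/(2*l)) / Real.sin ((2*m+1)*π/(2*l))
            - Real.cos ((2*n+1)*π/(2*l)) / Real.sin ((2*n+1)*π/(2*l)))
        + (π^2 / (2*l^2)) *
          (1 / (Real.sin ((2*n+1)*π/(2*l)))^2 - 1 / (Real.sin ((2*m+1)*π/(2*l)))^2) := by
  set α := (2*n+1)/(2*l) with hα_def
  set β := (2*m+1)/(2*l) with hβ_def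
  have hl0 : (2*l) ≠ 0 := by positivity
  have hα : α ∈ Ioo (0:ℝ) 1 := by
    constructor
    · rw [hα_def]; exact div_pos (by linarith) (by linarith)
    · rw [hα_def, div_lt_one (by linarith)]; linarith
  have hβ : β ∈ Ioo (0:ℝ) 1 := by
    constructor
    · rw [hβ_def]; exact div_pos (by linarith) (by linarith)
    · rw [hβ_def, div_lt_one (by linarith)]; linarith
  set G : ℝ → ℝ := fun t => (Real.log a / (2*l)) * j1 α β t
    + (1/(2*l^2)) * (j2 α t - j2 β t) with hG_def
  have hpt : ∀ x ∈ Ioi (0:ℝ), ((2*l) * x ^ (2*l - 1)) • G (x ^ (2*l))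
      = (x ^ (2*n) - x ^ (2*m)) * Real.log (a * x^2) / (x ^ (2*l) - 1) := by
    intro x hx
    have hx0 : (0:ℝ) < x := hx
    have hXα : (x ^ (2*l)) ^ (α-1) = x ^ (2*n) * x * (x^(2*l))⁻¹ := by
      have hexp : (2*l)*(α-1) = 2*n + 1 + (-(2*l)) := by
        rw [hα_def]; field_simp; ring
      rw [← Real.rpow_mul hx0.le, hexp, Real.rpow_add hx0 (2*n+1) (-(2*l)),
        Real.rpow_add hx0 (2*n) 1, Real.rpow_one, Real.rpow_neg hx0.le]
    have hXβ : (x ^ (2*l)) ^ (β-1) = x ^ (2*m) * x * (x^(2*l))⁻¹ := by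
      have hexp : (2*l)*(β-1) = 2*m + 1 + (-(2*l)) := by
        rw [hβ_def]; field_simp; ring
      rw [← Real.rpow_mul hx0.le, hexp, Real.rpow_add hx0 (2*m+1) (-(2*l)),
        Real.rpow_add hx0 (2*m) 1, Real.rpow_one, Real.rpow_neg hx0.le]
    have hX1 : x ^ (2*l - 1) = x ^ (2*l) * x⁻¹ := by
      rw [show 2*l - 1 = 2*l + (-1) by ring, Real.rpow_add hx0, Real.rpow_neg_one]
    have hlogX : Real.log (x ^ (2*l)) = (2*l) * Real.log x := Real.log_rpow hx0 _
    have hloga : Real.log (a * x^2) = Real.log a + 2 * Real.log x := by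
      rw [Real.log_mul ha.ne' (pow_ne_zero 2 hx0.ne'), Real.log_pow]
      norm_num
    rw [smul_eq_mul, hG_def]
    simp only [j1, j2]
    rw [hXα, hXβ, hX1, hlogX, hloga]
    rcases eq_or_ne x 1 with rfl | hx1
    · simp
    · have hR1 : x ^ (2*l) ≠ 1 := by
        rcases lt_trichotomy x 1 with h | h | h
        · exact ne_of_lt (Real.rpow_lt_one hx0.le h (by linarith))
        · exact absurd h hx1
        · exact ne_of_gt ((Real.one_lt_rpow_iff_of_pos hx0).2 (Or.inl ⟨h, by linarith⟩))
      have hRne : x ^ (2*l) - 1 ≠ 0 := sub_ne_zero.2 hR1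
      have hRpos : (0:ℝ) < x ^ (2*l) := Real.rpow_pos_of_pos hx0 _
      field_simp
  have hsub : (∫ x in Ioi (0:ℝ),
      (x ^ (2*n) - x ^ (2*m)) * Real.log (a * x^2) / (x ^ (2*l) - 1))
      = ∫ t in Ioi (0:ℝ), G t := by
    rw [← setIntegral_congr_fun measurableSet_Ioi hpt]
    exact integral_comp_rpow_Ioi_of_pos (by linarith)
  have hGsplit : (∫ t in Ioi (0:ℝ), G t)
      = (Real.log a / (2*l)) * J1 α β + (1/(2*l^2)) * (J2 α - J2 β) := by
    simp only [hG_def]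
    have hint2 : Integrable (fun t => j2 α t - j2 β t) (volume.restrict (Ioi (0:ℝ))) :=
      (intJ2 hα).sub (intJ2 hβ)
    rw [integral_add ((intJ1 hα hβ).const_mul _) (hint2.const_mul _),
      integral_const_mul, integral_const_mul,
      integral_sub (intJ2 hα) (intJ2 hβ)]
    rfl
  have hargA : π * α = (2*n+1)*π/(2*l) := by rw [hα_def]; ring
  have hargB : π * β = (2*m+1)*π/(2*l) := by rw [hβ_def]; ring
  rw [hsub, hGsplit, J1_eq hα hβ, J2_eq hα, J2_eq hβ, hargA, hargB]
  ring
end
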